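/- arXiv:2103.08243 — 5 statements merged into one kernel-verified Lean document; each statement's English description precedes it below -/
import Mathlib

section
/- A permutation class C is well-quasi-ordered under the containment order if and only if C has at most countably many subclasses. -/
/-!
A lower subset `D` of `C` is determined by the minimal elements of `C \ D`, which form an
antichain. If `C` is well-quasi-ordered these antichains are finite, and there are only countably
many finite sets of permutations. Conversely, strict containment strictly increases the length, so
containment is well-founded and a class that is not well-quasi-ordered contains an infinite
antichain `A`; the lower closures of the `2 ^ ℵ₀` subsets of `A` are pairwise distinct subclasses.
-/

/-- `σ` is contained (as a pattern) in `π`. -/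
def PermContains {k n : ℕ} (σ : Equiv.Perm (Fin k)) (π : Equiv.Perm (Fin n)) : Prop :=
  ∃ f : Fin k → Fin n, StrictMono f ∧ ∀ i j : Fin k, σ i < σ j ↔ π (f i) < π (f j)

/-- A permutation of arbitrary length. -/
abbrev Permutation := Σ n : ℕ, Equiv.Perm (Fin n)

/-- The containment quasi-order on permutations. -/
def PermLE (σ π : Permutation) : Prop := PermContains σ.2 π.2

/-- Strict containment. -/
def PermLT (σ π : Permutation) : Prop := PermLE σ π ∧ ¬ PermLE π σ

/-- A permutation class: a set of permutations closed downward under containment. -/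
def IsPermClass (C : Set Permutation) : Prop :=
  ∀ σ π : Permutation, PermLE σ π → π ∈ C → σ ∈ C

/-- `β` is a basis element of the class `C`: a minimal permutation not in `C`. -/
def IsBasisElt (C : Set Permutation) (β : Permutation) : Prop :=
  β ∉ C ∧ ∀ σ : Permutation, PermLT σ β → σ ∈ C

open Set Cardinal

section LowerSubsets

variable {α : Type*}

theorem Set.Infinite.not_countable_powerset {A : Set α} (hA : A.Infinite) : ¬ (𝒫 A).Countable := by
  rw [← le_aleph0_iff_set_countable, mk_powerset, not_le]
  calc ℵ₀ < 2 ^ ℵ₀ := cantor ℵ₀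
    _ ≤ 2 ^ #A := power_le_power_left two_ne_zero (infinite_iff.1 hA.to_subtype)

section Preorder

variable [Preorder α]

theorem Set.isPWO_iff_finite_antichains [WellFoundedLT α] {C : Set α} :
    C.IsPWO ↔ ∀ A ⊆ C, IsAntichain (· ≤ ·) A → A.Finite := by
  refine ⟨fun hC A hAC hA => hA.finite_of_partiallyWellOrderedOn (hC.mono hAC), fun h => ?_⟩
  have : WellQuasiOrderedLE C := wellQuasiOrderedLE_iff.2 ⟨inferInstance, fun A hA =>
    (h _ (Subtype.coe_image_subset C A) (hA.image_embedding (OrderEmbedding.subtype _)))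
      |>.of_finite_image Subtype.val_injective.injOn⟩
  exact this.wqo

theorem IsLowerSet.eq_diff_upperClosure_minimal {C D : Set α} (hD : IsLowerSet D) (hDC : D ⊆ C)
    (hCD : (C \ D).IsPWO) : D = C \ upperClosure {x | Minimal (· ∈ C \ D) x} := by
  ext x
  simp only [mem_sdiff, SetLike.mem_coe, mem_upperClosure, mem_ofPred_eq, not_exists, not_and]
  refine ⟨fun hx => ⟨hDC hx, fun b hb hbx => hb.prop.2 (hD hbx hx)⟩, fun ⟨hxC, hx⟩ => ?_⟩
  by_contra hxD
  obtain ⟨b, hbx, hb⟩ := hCD.exists_le_minimal ⟨hxC, hxD⟩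
  exact hx b hb hbx

end Preorder

section PartialOrder

variable [PartialOrder α]

theorem IsAntichain.injOn_lowerClosure {A : Set α} (hA : IsAntichain (· ≤ ·) A) :
    (𝒫 A).InjOn fun S => (lowerClosure S : Set α) := fun S hS T hT h => by
  ext x
  rw [← (hA.subset hS).maximal_mem_lowerClosure_iff_mem,
    ← (hA.subset hT).maximal_mem_lowerClosure_iff_mem, SetLike.coe_injective h]

theorem Set.IsPWO.countable_lowerSubsets [Countable α] {C : Set α} (hC : C.IsPWO) :
    {D | D ⊆ C ∧ IsLowerSet D}.Countable := by
  let minimalsOutside (D : Set α) : Set α := {x | Minimal (· ∈ C \ D) x}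
  refine MapsTo.countable_of_injOn (f := minimalsOutside) (t := {s | s.Finite}) ?_ ?_
    Countable.ofPred_finite
  · intro D _
    exact (setOfPred_minimal_antichain _).finite_of_partiallyWellOrderedOn
      (hC.mono fun x hx => hx.prop.1)
  · rintro D ⟨hDC, hD⟩ E ⟨hEC, hE⟩ h
    calc D = C \ upperClosure (minimalsOutside D) :=
          hD.eq_diff_upperClosure_minimal hDC (hC.mono sdiff_subset)
      _ = C \ upperClosure (minimalsOutside E) := by rw [h]
      _ = E := (hE.eq_diff_upperClosure_minimal hEC (hC.mono sdiff_subset)).symm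

theorem IsLowerSet.not_countable_lowerSubsets_of_isAntichain {C A : Set α} (hC : IsLowerSet C)
    (hAC : A ⊆ C) (hA : IsAntichain (· ≤ ·) A) (hAinf : A.Infinite) :
    ¬ {D | D ⊆ C ∧ IsLowerSet D}.Countable := by
  have hmaps : MapsTo (fun S => (lowerClosure S : Set α)) (𝒫 A) {D | D ⊆ C ∧ IsLowerSet D} :=
    fun _ hS => ⟨lowerClosure_min (subset_trans hS hAC) hC, (lowerClosure _).lower⟩
  exact fun hcount => hAinf.not_countable_powerset <|
    hmaps.countable_of_injOn hA.injOn_lowerClosure hcount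

theorem IsLowerSet.isPWO_iff_countable_lowerSubsets [WellFoundedLT α] [Countable α] {C : Set α}
    (hC : IsLowerSet C) : C.IsPWO ↔ {D | D ⊆ C ∧ IsLowerSet D}.Countable := by
  refine ⟨IsPWO.countable_lowerSubsets, fun hcount => isPWO_iff_finite_antichains.2 ?_⟩
  intro A hAC hA
  by_contra hAinf
  exact hC.not_countable_lowerSubsets_of_isAntichain hAC hA hAinf hcount

end PartialOrder

end LowerSubsets

theorem permLE_refl (π : Permutation) : PermLE π π :=
  ⟨id, strictMono_id, fun _ _ => Iff.rfl⟩

theorem PermLE.trans {σ τ π : Permutation} (hστ : PermLE σ τ) (hτπ : PermLE τ π) :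
    PermLE σ π := by
  obtain ⟨f, hf, hfσ⟩ := hστ
  obtain ⟨g, hg, hgτ⟩ := hτπ
  exact ⟨g ∘ f, hg.comp hf, fun i j => (hfσ i j).trans (hgτ (f i) (f j))⟩

theorem PermLE.length_le {σ π : Permutation} (h : PermLE σ π) : σ.1 ≤ π.1 := by
  obtain ⟨f, hf, -⟩ := h
  simpa using Fintype.card_le_of_injective f hf.injective

/-- At equal lengths the embedding is the identity, so `σ ∘ π⁻¹` is strictly monotone on `Fin n`,
hence the identity. -/
theorem PermLE.eq_of_length_eq {σ π : Permutation} (h : PermLE σ π) (hlen : σ.1 = π.1) :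
    σ = π := by
  obtain ⟨n, σ⟩ := σ
  obtain ⟨m, π⟩ := π
  obtain rfl : n = m := hlen
  obtain ⟨f, hf, hσπ⟩ := h
  rw [hf.eq_id] at hσπ
  have hmono : StrictMono (σ ∘ π.symm) := fun i j hij =>
    (hσπ _ _).2 (by simpa using hij)
  have hσ : σ = π := Equiv.ext fun i => by simpa using congrFun hmono.eq_id (π i)
  rw [hσ]

@[reducible]
def Permutation.containmentOrder : PartialOrder Permutation where
  le := PermLE
  lt := PermLT
  le_refl := permLE_refl
  le_trans _ _ _ := PermLE.trans
  lt_iff_le_not_ge _ _ := Iff.rfl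
  le_antisymm _ _ h h' := h.eq_of_length_eq (h.length_le.antisymm h'.length_le)

section ContainmentOrder

attribute [local instance] Permutation.containmentOrder

theorem Permutation.wellFoundedLT : WellFoundedLT Permutation :=
  StrictMono.wellFoundedLT (f := fun π : Permutation => π.1) fun _ _ h =>
    h.le.length_le.lt_of_ne fun hlen => h.ne (h.le.eq_of_length_eq hlen)

theorem isPermClass_iff_isLowerSet (C : Set Permutation) : IsPermClass C ↔ IsLowerSet C :=
  ⟨fun h _ _ hle hmem => h _ _ hle hmem, fun h _ _ hle hmem => h hle hmem⟩

end ContainmentOrder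

/-- A permutation class is wqo iff it has at most countably many subclasses. -/
theorem stmt_8 (C : Set Permutation) (hC : IsPermClass C) :
    (∀ f : ℕ → Permutation, (∀ n, f n ∈ C) →
        ∃ i j : ℕ, i < j ∧ PermLE (f i) (f j)) ↔
      {D : Set Permutation | D ⊆ C ∧ IsPermClass D}.Countable := by
  let _ := Permutation.containmentOrder
  have _ := Permutation.wellFoundedLT
  simp only [isPermClass_iff_isLowerSet]
  rw [← ((isPermClass_iff_isLowerSet C).1 hC).isPWO_iff_countable_lowerSubsets]
  exact partiallyWellOrderedOn_iff_exists_lt.symm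
end

section
/- For all k ≥ 5, the cycle C_k is not an induced subgraph of any inversion graph of a permutation. -/
/-- The inversion graph of a permutation: `i ~ j` iff they form an inversion. -/
def invGraph {n : ℕ} (π : Equiv.Perm (Fin n)) : SimpleGraph (Fin n) :=
  SimpleGraph.fromRel (fun i j => i < j ∧ π j < π i)

/-- The chordless cycle on `k` vertices. -/
def cycleG (k : ℕ) : SimpleGraph (ZMod k) :=
  SimpleGraph.fromRel (fun i j => i = j + 1)

/-!
Realise an induced subgraph of an inversion graph by the positions `e w` and the values
`π (e w)` of its vertices. Let `u` be the leftmost and `v` the lowest vertex. The neighbours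
of `u` lie below it and its non-neighbours above it; the neighbours of `v` lie to its left
and its non-neighbours to its right. Hence `u ~ v` as soon as `u` has a neighbour, and for any
`a ~ u`, `b ~ v` with `a ≁ v`, `u ≁ b`, the vertex `b` is left of and above `a`, so `a ~ b`.
In `C_k` with `k ≥ 5`, the edge `u ~ v` extends to an induced path `a - u - v - b`, whose ends
are not adjacent.
-/

lemma invGraph_adj_iff_of_lt {n : ℕ} {π : Equiv.Perm (Fin n)} {i j : Fin n} (h : i < j) :
    (invGraph π).Adj i j ↔ π j < π i := by
  simp [invGraph, SimpleGraph.fromRel_adj, h, h.ne, h.not_gt]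

namespace invGraph

variable {V : Type*} {G : SimpleGraph V} {n : ℕ} {π : Equiv.Perm (Fin n)}
  (e : G ↪g invGraph π) {u v a b : V}

lemma adj_iff_of_lt (h : e a < e b) : G.Adj a b ↔ π (e b) < π (e a) :=
  e.map_adj_iff.symm.trans (invGraph_adj_iff_of_lt h)

lemma perm_lt_of_adj_leftmost (hu : ∀ w, e u ≤ e w) (h : G.Adj u a) : π (e a) < π (e u) :=
  (adj_iff_of_lt e ((hu a).lt_of_ne (e.injective.ne h.ne))).1 h

lemma perm_le_of_not_adj_leftmost (hu : ∀ w, e u ≤ e w) (h : ¬G.Adj u a) :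
    π (e u) ≤ π (e a) := by
  rcases (hu a).eq_or_lt with heq | hlt
  · rw [heq]
  · exact not_lt.1 ((adj_iff_of_lt e hlt).not.1 h)

lemma lt_of_adj_lowest (hv : ∀ w, π (e v) ≤ π (e w)) (h : G.Adj v b) : e b < e v := by
  refine lt_of_not_ge fun hle => (hv b).not_gt ?_
  exact (adj_iff_of_lt e (hle.lt_of_ne (e.injective.ne h.ne))).1 h

lemma le_of_not_adj_lowest (hv : ∀ w, π (e v) ≤ π (e w)) (h : ¬G.Adj v b) : e v ≤ e b := by
  refine le_of_not_gt fun hlt => hlt.ne (π.injective (le_antisymm ?_ (hv b)))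
  exact not_lt.1 ((adj_iff_of_lt e hlt).not.1 fun h' => h h'.symm)

lemma adj_leftmost_lowest (hu : ∀ w, e u ≤ e w) (hv : ∀ w, π (e v) ≤ π (e w))
    (ha : G.Adj u a) : G.Adj u v := by
  by_contra huv
  exact (hv a).not_gt ((perm_lt_of_adj_leftmost e hu ha).trans_le
    (perm_le_of_not_adj_leftmost e hu huv))

lemma adj_of_adj_leftmost_of_adj_lowest (hu : ∀ w, e u ≤ e w) (hv : ∀ w, π (e v) ≤ π (e w))
    (hua : G.Adj u a) (hvb : G.Adj v b) (hva : ¬G.Adj v a) (hub : ¬G.Adj u b) : G.Adj a b :=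
  have hba : e b < e a := (lt_of_adj_lowest e hv hvb).trans_le (le_of_not_adj_lowest e hv hva)
  ((adj_iff_of_lt e hba).2 ((perm_lt_of_adj_leftmost e hu hua).trans_le
    (perm_le_of_not_adj_leftmost e hu hub))).symm

end invGraph

section Cycle

variable {k : ℕ}

lemma ZMod.natCast_ne_zero_of_pos_of_lt {m : ℕ} (hm : 0 < m) (hmk : m < k) :
    (m : ZMod k) ≠ 0 := by
  rw [Ne, ZMod.natCast_eq_zero_iff]
  exact fun hdvd => (Nat.le_of_dvd hm hdvd).not_gt hmk

lemma cycleG_adj_iff (hk : 2 ≤ k) {a b : ZMod k} :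
    (cycleG k).Adj a b ↔ b - a = 1 ∨ b - a = -1 := by
  have h1 : (1 : ZMod k) ≠ 0 := by
    exact_mod_cast ZMod.natCast_ne_zero_of_pos_of_lt one_pos hk
  simp only [cycleG, SimpleGraph.fromRel_adj, sub_eq_iff_eq_add', ne_eq]
  constructor
  · rintro ⟨-, rfl | rfl⟩
    · exact Or.inr (by ring)
    · exact Or.inl (by ring)
  · rintro (rfl | rfl)
    · exact ⟨fun h => h1 (by linear_combination -h), Or.inr rfl⟩
    · exact ⟨fun h => h1 (by linear_combination h), Or.inl (by ring)⟩

lemma cycleG_not_adj_of_sub_eq (hk : 2 ≤ k) {a b d : ZMod k} (c : ℕ) (hc : 2 ≤ c)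
    (hck : c + 2 ≤ k) (hd : d = 1 ∨ d = -1) (h : b - a = c * d) : ¬(cycleG k).Adj a b := by
  have hsub : ((c - 1 : ℕ) : ZMod k) ≠ 0 := ZMod.natCast_ne_zero_of_pos_of_lt (by omega) (by omega)
  have hadd : ((c + 1 : ℕ) : ZMod k) ≠ 0 := ZMod.natCast_ne_zero_of_pos_of_lt (by omega) (by omega)
  push_cast [Nat.cast_sub (by omega : 1 ≤ c)] at hsub hadd
  rw [cycleG_adj_iff hk, h]
  rcases hd with rfl | rfl <;> rintro (h' | h')
  exacts [hsub (by linear_combination h'), hadd (by linear_combination h'),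
    hadd (by linear_combination -h'), hsub (by linear_combination -h')]

lemma cycleG_adj_add_one (hk : 2 ≤ k) (a : ZMod k) : (cycleG k).Adj a (a + 1) :=
  (cycleG_adj_iff hk).2 (Or.inl (by ring))

lemma cycleG_exists_induced_path (hk : 5 ≤ k) {u v : ZMod k} (huv : (cycleG k).Adj u v) :
    ∃ a b, (cycleG k).Adj u a ∧ (cycleG k).Adj v b ∧ ¬(cycleG k).Adj v a ∧
      ¬(cycleG k).Adj u b ∧ ¬(cycleG k).Adj a b := by
  obtain ⟨d, hd, rfl⟩ : ∃ d, (d = 1 ∨ d = -1) ∧ v = u + d :=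
    ⟨v - u, (cycleG_adj_iff (by omega)).1 huv, by ring⟩
  have hk2 : 2 ≤ k := by omega
  refine ⟨u - d, u + d + d, ?_, ?_, ?_, ?_, ?_⟩
  · exact ((cycleG_adj_iff hk2).2 (by rwa [sub_sub_cancel])).symm
  · exact (cycleG_adj_iff hk2).2 (by rwa [add_sub_cancel_left])
  · exact cycleG_not_adj_of_sub_eq hk2 2 le_rfl (by omega) (d := -d)
      (by rcases hd with rfl | rfl <;> simp) (by push_cast; ring)
  · exact cycleG_not_adj_of_sub_eq hk2 2 le_rfl (by omega) hd (by push_cast; ring)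
  · exact cycleG_not_adj_of_sub_eq hk2 3 (by norm_num) (by omega) hd (by push_cast; ring)

end Cycle

/-- For `k ≥ 5`, the cycle `C_k` is not an induced subgraph of any
inversion graph. -/
theorem stmt_10 (k : ℕ) (hk : 5 ≤ k) {n : ℕ} (π : Equiv.Perm (Fin n)) :
    IsEmpty (cycleG k ↪g invGraph π) := by
  refine ⟨fun e => ?_⟩
  have : NeZero k := ⟨by omega⟩
  obtain ⟨u, hu⟩ := Finite.exists_min fun w => e w
  obtain ⟨v, hv⟩ := Finite.exists_min fun w => π (e w)
  have huv := invGraph.adj_leftmost_lowest e hu hv (cycleG_adj_add_one (by omega) u)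
  obtain ⟨a, b, hua, hvb, hva, hub, hab⟩ := cycleG_exists_induced_path hk huv
  exact hab (invGraph.adj_of_adj_leftmost_of_adj_lowest e hu hv hua hvb hva hub)
end

section
/- A well-founded quasi-order (X, ≤) is a well-quasi-order if and only if it does not contain a minimal bad sequence; equivalently, if X contains a bad sequence then it contains a minimal bad sequence. -/
/-!
Given a bad sequence, choose its terms one at a time: by well-foundedness, the `n`-th term can be
taken minimal among the `n`-th terms of all bad sequences that extend the terms chosen so far.
Every finite prefix of the resulting sequence extends to a bad sequence, so the sequence is bad,
and it is minimal by construction.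
-/

variable {X : Type*}

/-- A bad sequence: one with no good pair. -/
def IsBadSeq (r : X → X → Prop) (f : ℕ → X) : Prop :=
  ∀ i j : ℕ, i < j → ¬ r (f i) (f j)

/-- A minimal bad sequence: a bad sequence in which no term can be replaced by
a strictly smaller element (keeping the earlier terms) so that the resulting
sequence is still bad. -/
def IsMinBadSeq (r : X → X → Prop) (f : ℕ → X) : Prop :=
  IsBadSeq r f ∧
    ∀ i : ℕ, ¬ ∃ g : ℕ → X, (∀ k : ℕ, k < i → g k = f k) ∧
      (r (g i) (f i) ∧ ¬ r (f i) (g i)) ∧ IsBadSeq r g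

/-- Well-foundedness of a quasi-order: every nonempty subset contains a
minimal element. -/
def WFQO (r : X → X → Prop) : Prop :=
  ∀ S : Set X, S.Nonempty → ∃ x ∈ S, ∀ y ∈ S, ¬ (r y x ∧ ¬ r x y)

/-- No bad sequence agreeing with `f` below `n` has a strictly smaller `n`-th term
(`f` itself need not be bad). -/
def IsMinBadAt (r : X → X → Prop) (n : ℕ) (f : ℕ → X) : Prop :=
  ∀ g : ℕ → X, (∀ k < n, g k = f k) → r (g n) (f n) ∧ ¬ r (f n) (g n) → ¬ IsBadSeq r g

section

variable {r : X → X → Prop}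

theorem IsBadSeq.exists_isMinBadAt (hwf : WFQO r) {f : ℕ → X} (hf : IsBadSeq r f) (n : ℕ) :
    ∃ g : ℕ → X, IsBadSeq r g ∧ (∀ k < n, g k = f k) ∧ IsMinBadAt r n g := by
  obtain ⟨-, ⟨g, hg, hgf, rfl⟩, hmin⟩ :=
    hwf {x | ∃ g : ℕ → X, IsBadSeq r g ∧ (∀ k < n, g k = f k) ∧ g n = x}
      ⟨f n, f, hf, fun _ _ => rfl, rfl⟩
  refine ⟨g, hg, hgf, fun h hhg hlt hh => hmin (h n) ⟨h, hh, fun k hk => ?_, rfl⟩ hlt⟩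
  rw [hhg k hk, hgf k hk]

namespace BadSeq

noncomputable def minimizeAt (hwf : WFQO r) (f : {f : ℕ → X // IsBadSeq r f}) (n : ℕ) :
    {f : ℕ → X // IsBadSeq r f} :=
  ⟨(f.2.exists_isMinBadAt hwf n).choose, (f.2.exists_isMinBadAt hwf n).choose_spec.1⟩

variable (hwf : WFQO r) (f : {f : ℕ → X // IsBadSeq r f})

theorem minimizeAt_apply_of_lt {n k : ℕ} (hk : k < n) : (minimizeAt hwf f n).1 k = f.1 k :=
  (f.2.exists_isMinBadAt hwf n).choose_spec.2.1 k hk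

theorem isMinBadAt_minimizeAt (n : ℕ) : IsMinBadAt r n (minimizeAt hwf f n).1 :=
  (f.2.exists_isMinBadAt hwf n).choose_spec.2.2

noncomputable def minimizeUpTo : ℕ → {f : ℕ → X // IsBadSeq r f}
  | 0 => minimizeAt hwf f 0
  | n + 1 => minimizeAt hwf (minimizeUpTo n) (n + 1)

theorem isMinBadAt_minimizeUpTo : ∀ n, IsMinBadAt r n (minimizeUpTo hwf f n).1
  | 0 => isMinBadAt_minimizeAt hwf f 0
  | n + 1 => isMinBadAt_minimizeAt hwf _ (n + 1)

theorem minimizeUpTo_apply_of_le {k m n : ℕ} (hkm : k ≤ m) (hmn : m ≤ n) :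
    (minimizeUpTo hwf f n).1 k = (minimizeUpTo hwf f m).1 k := by
  induction n, hmn using Nat.le_induction with
  | base => rfl
  | succ n hmn ih => exact (minimizeAt_apply_of_lt hwf _ (by omega)).trans ih

noncomputable def minimalLimit (n : ℕ) : X :=
  (minimizeUpTo hwf f n).1 n

theorem minimalLimit_eq_minimizeUpTo {k n : ℕ} (hkn : k ≤ n) :
    minimalLimit hwf f k = (minimizeUpTo hwf f n).1 k :=
  (minimizeUpTo_apply_of_le hwf f le_rfl hkn).symm

theorem isMinBadSeq_minimalLimit : IsMinBadSeq r (minimalLimit hwf f) := by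
  refine ⟨fun i j hij => ?_, fun i ⟨g, hgf, hlt, hg⟩ => ?_⟩
  · rw [minimalLimit_eq_minimizeUpTo hwf f hij.le]
    exact (minimizeUpTo hwf f j).2 i j hij
  · refine isMinBadAt_minimizeUpTo hwf f i g (fun k hk => ?_) hlt hg
    rw [hgf k hk, minimalLimit_eq_minimizeUpTo hwf f hk.le]

end BadSeq

theorem IsBadSeq.exists_isMinBadSeq (hwf : WFQO r) {f : ℕ → X} (hf : IsBadSeq r f) :
    ∃ g : ℕ → X, IsMinBadSeq r g :=
  ⟨_, BadSeq.isMinBadSeq_minimalLimit hwf ⟨f, hf⟩⟩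

end

theorem stmt_17_general (r : X → X → Prop) (hwf : WFQO r) :
    (∀ f : ℕ → X, ∃ i j : ℕ, i < j ∧ r (f i) (f j)) ↔
      ¬ ∃ f : ℕ → X, IsMinBadSeq r f := by
  constructor
  · rintro hgood ⟨f, hf, -⟩
    obtain ⟨i, j, hij, hr⟩ := hgood f
    exact hf i j hij hr
  · intro hnone f
    by_contra! hbad
    exact hnone (IsBadSeq.exists_isMinBadSeq hwf hbad)

/-- A well-founded quasi-order is wqo iff it contains no minimal bad sequence. -/
theorem stmt_17 (r : X → X → Prop)
    (hrefl : Reflexive r) (htrans : Transitive r) (hwf : WFQO r) :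
    (∀ f : ℕ → X, ∃ i j : ℕ, i < j ∧ r (f i) (f j)) ↔
      ¬ ∃ f : ℕ → X, IsMinBadSeq r f :=
  stmt_17_general r hwf
end

section
/- If (X, ≤) is a well-founded quasi-order and S = {x_1, x_2, ...} is a minimal bad sequence from X, then the proper closure S^< = {y : y < x for some x ∈ S} is well-quasi-ordered. -/
/-
If a bad sequence `f` lay strictly below a minimal bad sequence `x`, say `f n < x (m n)`, pick `n₀`
with `k = m n₀` least. Splicing `x 0, …, x (k-1)` with the tail `f n₀, f (n₀+1), …` gives a bad
sequence: a good pair `x i ≤ f (n₀+j)` with `i < k ≤ m (n₀+j)` would yield the good pair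
`x i ≤ x (m (n₀+j))`. Its `k`-th term `f n₀ < x k` contradicts the minimality of `x`.
-/

variable {X : Type*}

def spliceSeq (x : ℕ → X) (k : ℕ) (f : ℕ → X) : ℕ → X :=
  fun i => if i < k then x i else f (i - k)

lemma spliceSeq_of_lt (x f : ℕ → X) {k i : ℕ} (hi : i < k) : spliceSeq x k f i = x i := if_pos hi

lemma spliceSeq_of_le (x f : ℕ → X) {k i : ℕ} (hi : k ≤ i) :
    spliceSeq x k f i = f (i - k) :=
  if_neg (Nat.not_lt.mpr hi)

namespace IsBadSeq

variable {r : X → X → Prop}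

lemma comp_add {f : ℕ → X} (hf : IsBadSeq r f) (n : ℕ) : IsBadSeq r (fun i => f (n + i)) :=
  fun _ _ hij => hf _ _ (Nat.add_lt_add_left hij n)

lemma spliceSeq {x f : ℕ → X} {k : ℕ} (hx : IsBadSeq r x) (hf : IsBadSeq r f)
    (hxf : ∀ i < k, ∀ n, ¬ r (x i) (f n)) : IsBadSeq r (spliceSeq x k f) := by
  intro i j hij
  rcases Nat.lt_or_ge j k with hj | hj
  · rw [spliceSeq_of_lt x f hj, spliceSeq_of_lt x f (hij.trans hj)]
    exact hx i j hij
  rw [spliceSeq_of_le x f hj]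
  rcases Nat.lt_or_ge i k with hi | hi
  · rw [spliceSeq_of_lt x f hi]
    exact hxf i hi _
  · rw [spliceSeq_of_le x f hi]
    exact hf _ _ (by omega)

end IsBadSeq

lemma IsMinBadSeq.not_isBadSeq_of_forall_lt {r : X → X → Prop} [IsTrans X r]
    {x f : ℕ → X} (hx : IsMinBadSeq r x) (hf : ∀ n, ∃ m, r (f n) (x m) ∧ ¬ r (x m) (f n)) :
    ¬ IsBadSeq r f := by
  intro hfbad
  choose m hm_le hm_not_ge using hf
  set n₀ := Function.argmin m
  set k := m n₀
  have hk_le : ∀ n, k ≤ m n := fun n => Function.argmin_le m n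
  have hbelow : ∀ i < k, ∀ n, ¬ r (x i) (f (n₀ + n)) := fun i hi n hr =>
    hx.1 i _ (hi.trans_le (hk_le _)) (_root_.trans hr (hm_le _))
  have hbad : IsBadSeq r (spliceSeq x k fun n => f (n₀ + n)) :=
    hx.1.spliceSeq (hfbad.comp_add n₀) hbelow
  have hk_term : spliceSeq x k (fun n => f (n₀ + n)) k = f n₀ := by
    rw [spliceSeq_of_le _ _ le_rfl, Nat.sub_self, Nat.add_zero]
  refine hx.2 k ⟨_, fun i hi => spliceSeq_of_lt x _ hi, ?_, hbad⟩
  rw [hk_term]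
  exact ⟨hm_le n₀, hm_not_ge n₀⟩

theorem stmt_18_general (r : X → X → Prop)
    (htrans : Transitive r)
    (x : ℕ → X) (hmin : IsMinBadSeq r x) :
    ∀ f : ℕ → X, (∀ n : ℕ, ∃ m : ℕ, r (f n) (x m) ∧ ¬ r (x m) (f n)) →
      ∃ i j : ℕ, i < j ∧ r (f i) (f j) := by
  intro f hf
  have : IsTrans X r := ⟨fun _ _ _ => @htrans _ _ _⟩
  by_contra hgood
  exact hmin.not_isBadSeq_of_forall_lt hf fun i j hij hr => hgood ⟨i, j, hij, hr⟩

/-- The proper closure of a minimal bad sequence is wqo. -/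
theorem stmt_18 (r : X → X → Prop)
    (hrefl : Reflexive r) (htrans : Transitive r) (hwf : WFQO r)
    (x : ℕ → X) (hmin : IsMinBadSeq r x) :
    ∀ f : ℕ → X, (∀ n : ℕ, ∃ m : ℕ, r (f n) (x m) ∧ ¬ r (x m) (f n)) →
      ∃ i j : ℕ, i < j ∧ r (f i) (f j) :=
  stmt_18_general r htrans x hmin
end

section
/- Higman's lemma: if (X, ≤) is a well-quasi-order, then the set X* of finite words over X is well-quasi-ordered under the generalised subword order, where v_1...v_k ≤ w_1...w_n if there exist indices i_1 < ... < i_k with v_j ≤ w_{i_j} for all j. -/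
theorem List.wellQuasiOrdered_sublistForall₂ {α : Type*} (r : α → α → Prop) [IsPreorder α r]
    (h : WellQuasiOrdered r) : WellQuasiOrdered (List.SublistForall₂ r) := by
  rw [← Set.partiallyWellOrderedOn_univ_iff] at h ⊢
  simpa using h.partiallyWellOrderedOn_sublistForall₂ r

/-- Higman's lemma: if `(X, r)` is wqo, then finite words over `X` are wqo
under the generalised subword order. -/
theorem stmt_19 {X : Type*} (r : X → X → Prop)
    (hrefl : Reflexive r) (htrans : Transitive r)
    (hwqo : ∀ f : ℕ → X, ∃ i j : ℕ, i < j ∧ r (f i) (f j)) :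
    ∀ f : ℕ → List X, ∃ i j : ℕ, i < j ∧ List.SublistForall₂ r (f i) (f j) :=
  have : IsPreorder X r := { refl := hrefl, trans := htrans }
  List.wellQuasiOrdered_sublistForall₂ r hwqo
end
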